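/- Let q be an odd prime power, m > 1 odd, and A = {x ∈ F_{q^m}* : Tr_{q^m/q}(x²) = 0}. Choose a_1 ∈ A and inductively a_ℓ ∈ A ∩ H_1 ∩ ... ∩ H_{ℓ−1}, where H_ℓ = {x ∈ F_{q^m}* : Tr_{q^m/q}(x a_ℓ) = 0}, with a_1, ..., a_ℓ linearly independent over F_q. Then for 1 ≤ ℓ ≤ (m−1)/2, |A ∩ H_1 ∩ ... ∩ H_ℓ| = q^{m−ℓ−1} − 1. -/

import Mathlib

/-!
The trace form `B(x, y) = Tr(xy)` is a nondegenerate symmetric bilinear form on the `m`-dimensional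
`F`-space `K`, and `a_1, …, a_ℓ` span a totally isotropic subspace `W` of dimension `ℓ`, so the set
to be counted consists of the nonzero isotropic vectors of `Wᗮ`. Writing `Wᗮ = W ⊕ U`, the form
vanishes on `W × Wᗮ` and is nondegenerate on `U`, which has odd dimension `m - 2ℓ`; hence `Wᗮ`
contains `q^ℓ · q^(m-2ℓ-1)` isotropic vectors. That a nondegenerate form in odd dimension `n` has
`q^(n-1)` isotropic vectors follows by diagonalising it and counting the zeros of
`∑ bᵢ xᵢ²` with an additive character `ψ`: the term of each `t ≠ 0` is a product of quadratic
Gauss sums, equal to `χ(t)ⁿ = χ(t)` times a constant, and these cancel.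
-/

open Finset Module

theorem AddChar.map_sum_eq_prod {A M : Type*} [AddCommMonoid A] [CommMonoid M] (ψ : AddChar A M)
    {ι : Type*} (s : Finset ι) (f : ι → A) : ψ (∑ i ∈ s, f i) = ∏ i ∈ s, ψ (f i) := by
  classical
  induction s using Finset.induction with
  | empty => simp
  | insert _ _ h ih => rw [sum_insert h, prod_insert h, map_add_eq_mul, ih]

theorem Nat.card_subtype_ne_zero_and {M : Type*} [Zero M] [Finite M] {p : M → Prop} (h0 : p 0) :
    Nat.card {x // x ≠ 0 ∧ p x} = Nat.card {x // p x} - 1 := by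
  have h := Set.ncard_sdiff_singleton_of_mem (s := {x | p x}) h0
  rw [← Nat.card_coe_set_eq, ← Nat.card_coe_set_eq] at h
  exact (Nat.card_congr (Equiv.subtypeEquivRight fun x => and_comm)).trans h

theorem FiniteField.ringChar_ne_two_of_odd_card {F : Type*} [Field F] [Fintype F]
    (h : Odd (Fintype.card F)) : ringChar F ≠ 2 := fun h2 => by
  rw [FiniteField.even_card_iff_char_two, ← Nat.even_iff] at h2
  exact Nat.not_even_iff_odd.mpr h h2

theorem Module.finrank_eq_of_card_eq_pow {F V : Type*} [Field F] [Fintype F] [AddCommGroup V]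
    [Module F V] [Fintype V] {m : ℕ} (h : Fintype.card V = Fintype.card F ^ m) :
    finrank F V = m :=
  Nat.pow_right_injective Fintype.one_lt_card (Module.card_eq_pow_finrank.symm.trans h)

section QuadraticGaussSum

variable {F R : Type*} [Field F] [Fintype F] [DecidableEq F] [CommRing R] [IsDomain R]
  {ψ : AddChar F R}

local notation "χ" => MulChar.ringHomComp (quadraticChar F) (Int.castRingHom R)

theorem sum_addChar_mul_sq (hF : ringChar F ≠ 2) (hψ : ψ.IsPrimitive) {c : F} (hc : c ≠ 0) :
    ∑ y, ψ (c * y ^ 2) = χ c * gaussSum χ ψ := by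
  have hfiber : ∑ y, ψ (c * y ^ 2) = ∑ z, (χ z + 1) * ψ (c * z) := by
    rw [← sum_fiberwise univ (· ^ 2)]
    refine sum_congr rfl fun z _ => ?_
    rw [sum_congr rfl fun y hy => by rw [(mem_filter.mp hy).2], sum_const, nsmul_eq_mul,
      MulChar.ringHomComp_apply, eq_intCast, ← Set.toFinset_ofPred]
    exact_mod_cast congrArg (fun k : ℤ => (k : R) * ψ (c * z)) (quadraticChar_card_sqrts hF z)
  have hvanish : ∑ z, ψ (c * z) = 0 := by
    simpa [hc, mul_comm] using AddChar.sum_mulShift c hψ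
  have hshift := gaussSum_mulShift χ ψ (Units.mk0 c hc)
  rw [Units.val_mk0] at hshift
  calc ∑ y, ψ (c * y ^ 2) = ∑ z, χ z * ψ (c * z) := by
        simp only [hfiber, add_mul, one_mul, sum_add_distrib, hvanish, add_zero]
    _ = gaussSum χ (ψ.mulShift c) := by simp only [gaussSum, AddChar.mulShift_apply]
    _ = χ c * gaussSum χ ψ := by
        rw [← hshift, ← mul_assoc, ← map_mul, ← sq, MulChar.ringHomComp_apply,
          quadraticChar_sq_one' hc, map_one, one_mul]

theorem sum_addChar_mul_diagonal {ι : Type*} [Fintype ι] [DecidableEq ι] (hF : ringChar F ≠ 2)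
    (hψ : ψ.IsPrimitive) (hι : Odd (Fintype.card ι)) {b : ι → F} (hb : ∀ i, b i ≠ 0) {t : F}
    (ht : t ≠ 0) :
    ∑ x : ι → F, ψ (t * ∑ i, b i * x i ^ 2) = χ t * ∏ i, (χ (b i) * gaussSum χ ψ) := by
  have hodd : χ t ^ Fintype.card ι = χ t := by
    obtain ⟨k, hk⟩ := hι
    rw [hk, pow_succ, pow_mul, ← map_pow, MulChar.ringHomComp_apply, quadraticChar_sq_one' ht,
      map_one, one_pow, one_mul]
  simp_rw [mul_sum, AddChar.map_sum_eq_prod, ← mul_assoc]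
  rw [← Fintype.prod_sum (fun i y => ψ (t * b i * y ^ 2)), ← hodd, ← card_univ, ← prod_const,
    ← prod_mul_distrib]
  refine prod_congr rfl fun i _ => ?_
  rw [sum_addChar_mul_sq hF hψ (mul_ne_zero ht (hb i)), map_mul, mul_assoc]

end QuadraticGaussSum

theorem card_diagonal_quadric {F ι : Type*} [Field F] [Fintype F] [Fintype ι]
    (hF : ringChar F ≠ 2) (hι : Odd (Fintype.card ι)) {b : ι → F} (hb : ∀ i, b i ≠ 0) :
    Nat.card {x : ι → F // ∑ i, b i * x i ^ 2 = 0} = Fintype.card F ^ (Fintype.card ι - 1) := by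
  classical
  obtain ⟨ψ, hψ1⟩ : ∃ ψ : AddChar F ℂ, ψ 1 ≠ 1 := AddChar.exists_apply_ne_zero.mpr one_ne_zero
  have hψ : ψ.IsPrimitive := AddChar.IsPrimitive.of_ne_one (AddChar.ne_one_iff.mpr ⟨1, hψ1⟩)
  set q := Fintype.card F
  set n := Fintype.card ι
  set Q : (ι → F) → F := fun x => ∑ i, b i * x i ^ 2
  have hcount : ∑ x, ∑ t, ψ (t * Q x) = q * Nat.card {x // Q x = 0} := by
    simp [AddChar.sum_mulShift _ hψ, sum_ite, Nat.card_eq_fintype_card, Fintype.card_subtype,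
      mul_comm, q]
  have hzero : ∑ x, ψ (0 * Q x) = (q : ℂ) ^ n := by simp [q, n]
  have hnonzero : ∑ t ∈ univ.erase 0, ∑ x, ψ (t * Q x) = 0 := by
    rw [sum_congr rfl fun t ht => sum_addChar_mul_diagonal hF hψ hι hb (ne_of_mem_erase ht),
      ← sum_mul, sum_erase _ (by simp)]
    simp only [MulChar.ringHomComp_apply, eq_intCast]
    rw [← Int.cast_sum, quadraticChar_sum_zero hF, Int.cast_zero, zero_mul]
  have h : (q : ℂ) * Nat.card {x // Q x = 0} = q ^ n := by
    rw [← hcount, sum_comm, ← add_sum_erase _ _ (mem_univ 0), hzero, hnonzero, add_zero]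
  have hq : 0 < q := Fintype.card_pos
  have hn : n = n - 1 + 1 := (Nat.sub_add_cancel hι.pos).symm
  refine Nat.eq_of_mul_eq_mul_left hq ?_
  rw [← pow_succ', ← hn]
  exact_mod_cast h

namespace LinearMap.BilinForm

variable {F V : Type*} [Field F] [AddCommGroup V] [Module F V] {B : LinearMap.BilinForm F V}

theorem mem_orthogonal_span_iff {S : Set V} {x : V} :
    x ∈ B.orthogonal (Submodule.span F S) ↔ ∀ s ∈ S, B s x = 0 :=
  Submodule.span_le (p := LinearMap.ker (B.flip x))

theorem span_le_orthogonal_span {S : Set V} (hS : ∀ s ∈ S, ∀ t ∈ S, B s t = 0) :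
    Submodule.span F S ≤ B.orthogonal (Submodule.span F S) :=
  Submodule.span_le.mpr fun t ht => mem_orthogonal_span_iff.mpr fun s hs => hS s hs t ht

theorem card_isotropic_of_separatingLeft [Fintype F] [FiniteDimensional F V]
    (hF : ringChar F ≠ 2) (hB : B.IsSymm) (hnd : B.SeparatingLeft) (hV : Odd (finrank F V)) :
    Nat.card {v : V // B v v = 0} = Fintype.card F ^ (finrank F V - 1) := by
  have : Invertible (2 : F) := invertibleOfNonzero (Ring.two_ne_zero hF)
  have hassoc : QuadraticMap.associated B.toQuadraticMap = B :=
    QuadraticMap.associated_left_inverse F hB.eq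
  obtain ⟨w, ⟨e⟩⟩ := QuadraticForm.equivalent_weightedSumSquares_units_of_nondegenerate'
    B.toQuadraticMap (by rwa [hassoc])
  calc Nat.card {v : V // B v v = 0}
      = Nat.card {x : Fin (finrank F V) → F // ∑ i, (w i : F) * x i ^ 2 = 0} :=
        Nat.card_congr <| e.toLinearEquiv.toEquiv.subtypeEquiv fun v => by
          rw [← LinearMap.BilinMap.toQuadraticMap_apply, ← e.map_app v,
            QuadraticMap.weightedSumSquares_apply]
          simp [sq, Units.smul_def]
    _ = Fintype.card F ^ (finrank F V - 1) := by
        rw [card_diagonal_quadric hF (by simpa using hV) fun i => (w i).ne_zero, Fintype.card_fin]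

theorem card_isotropic_sup (hB : B.IsRefl) {W U : Submodule F V} (hWU : Disjoint W U)
    (hperp : W ⊔ U ≤ B.orthogonal W) :
    Nat.card {v : V // v ∈ W ⊔ U ∧ B v v = 0} = Nat.card W * Nat.card {u : U // B u u = 0} := by
  have hQ (w : W) (u : U) : B (w + u) (w + u) = B u u := by
    have hw := hperp (Submodule.mem_sup_left w.2)
    have hu := hperp (Submodule.mem_sup_right u.2)
    simp [hw w w.2, hu w w.2, hB _ _ (hu w w.2)]
  let f : W × {u : U // B u u = 0} → {v : V // v ∈ W ⊔ U ∧ B v v = 0} := fun p =>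
    ⟨p.1 + p.2.1, add_mem (Submodule.mem_sup_left p.1.2) (Submodule.mem_sup_right p.2.1.2),
      (hQ p.1 p.2.1).trans p.2.2⟩
  have hf : Function.Bijective f := by
    constructor
    · rintro ⟨w, u⟩ ⟨w', u'⟩ h
      have hsum : (w : V) + u = w' + u' := congrArg Subtype.val h
      have hdiff : (w : V) - w' = u' - u := by
        rw [sub_eq_sub_iff_add_eq_add, hsum, add_comm]
      have hzero :=
        Submodule.disjoint_def.mp hWU _ (sub_mem w.2 w'.2) (hdiff ▸ sub_mem u'.1.2 u.1.2)
      rw [sub_eq_zero] at hzero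
      rw [hzero, sub_self, eq_comm, sub_eq_zero] at hdiff
      ext <;> simp [hzero, hdiff]
    · rintro ⟨v, hv, hvv⟩
      obtain ⟨w, hw, u, hu, rfl⟩ := Submodule.mem_sup.mp hv
      exact ⟨(⟨w, hw⟩, ⟨⟨u, hu⟩, (hQ ⟨w, hw⟩ ⟨u, hu⟩).symm.trans hvv⟩), rfl⟩
  rw [← Nat.card_prod, Nat.card_congr (Equiv.ofBijective f hf)]

theorem nondegenerate_restrict_of_sup_eq_orthogonal [FiniteDimensional F V] (hB : B.IsRefl)
    (hnd : B.Nondegenerate) {W U : Submodule F V} (hWU : Disjoint W U)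
    (hsup : W ⊔ U = B.orthogonal W) : (B.restrict U).Nondegenerate := by
  refine B.nondegenerate_restrict_of_disjoint_orthogonal hB
    (Submodule.disjoint_def.mpr fun u hu huU => ?_)
  have huW : u ∈ B.orthogonal W := hsup ▸ Submodule.mem_sup_right hu
  have : u ∈ W := by
    rw [← orthogonal_orthogonal hnd hB W, ← hsup]
    intro n hn
    obtain ⟨w, hw, u', hu', rfl⟩ := Submodule.mem_sup.mp hn
    simp [huW w hw, huU u' hu']
  exact Submodule.disjoint_def.mp hWU u this hu

theorem card_isotropic_orthogonal [Fintype F] [FiniteDimensional F V] (hF : ringChar F ≠ 2)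
    (hB : B.IsSymm) (hnd : B.Nondegenerate) (hV : Odd (finrank F V)) {W : Submodule F V}
    (hW : W ≤ B.orthogonal W) :
    Nat.card {v : V // v ∈ B.orthogonal W ∧ B v v = 0} =
      Fintype.card F ^ (finrank F V - finrank F W - 1) := by
  obtain ⟨U, hWU, hsup⟩ := IsModularLattice.exists_disjoint_and_sup_eq hW
  have hUnd := nondegenerate_restrict_of_sup_eq_orthogonal hB.isRefl hnd hWU hsup
  have hrank : finrank F W + finrank F U + finrank F W = finrank F V := by
    have h1 := Submodule.finrank_sup_add_finrank_inf_eq W U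
    rw [hWU.eq_bot, finrank_bot, hsup, finrank_orthogonal hnd] at h1
    have h2 := Submodule.finrank_le W
    omega
  have hU : Odd (finrank F U) := by
    rw [Nat.odd_iff] at hV ⊢
    omega
  have hUcard : Nat.card {u : U // B u u = 0} = Fintype.card F ^ (finrank F U - 1) :=
    card_isotropic_of_separatingLeft hF (hB.restrict U) hUnd.1 hU
  rw [← hsup, card_isotropic_sup hB.isRefl hWU hsup.le, Module.natCard_eq_pow_finrank (K := F),
    Nat.card_eq_fintype_card, hUcard, ← pow_add]
  have := hU.pos
  congr 1
  omega

end LinearMap.BilinForm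

open LinearMap.BilinForm in
theorem card_quadric_cone_section_general
    (q m : ℕ) (hqodd : Odd q) (hmodd : Odd m)
    (F : Type) [Field F] [Fintype F] (hF : Fintype.card F = q)
    (K : Type) [Field K] [Fintype K] [Algebra F K]
    (hK : Fintype.card K = q ^ m)
    (a : Fin ((m - 1) / 2) → K) (ha : LinearIndependent F a)
    (hamem : ∀ i : Fin ((m - 1) / 2),
      a i ≠ 0 ∧ Algebra.trace F K (a i ^ 2) = 0 ∧
        ∀ j : Fin ((m - 1) / 2), j < i → Algebra.trace F K (a i * a j) = 0) :
    ∀ ℓ : ℕ, 1 ≤ ℓ → ℓ ≤ (m - 1) / 2 →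
      Nat.card {x : K // x ≠ 0 ∧ Algebra.trace F K (x ^ 2) = 0 ∧
          ∀ i : Fin ((m - 1) / 2), (i : ℕ) < ℓ → Algebra.trace F K (x * a i) = 0} =
        q ^ (m - ℓ - 1) - 1 := by
  intro ℓ _ hℓ
  have hm : finrank F K = m := Module.finrank_eq_of_card_eq_pow (hF ▸ hK)
  have hF2 : ringChar F ≠ 2 := FiniteField.ringChar_ne_two_of_odd_card (hF ▸ hqodd)
  have horth (i j) : Algebra.trace F K (a i * a j) = 0 := by
    rcases lt_trichotomy j i with h | rfl | h
    · exact (hamem i).2.2 j h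
    · rw [← sq]; exact (hamem _).2.1
    · rw [mul_comm]; exact (hamem j).2.2 i h
  set B := Algebra.traceForm F K
  set W := Submodule.span F (Set.range (a ∘ Fin.castLE hℓ))
  have hWrank : finrank F W = ℓ := by
    rw [finrank_span_eq_card (ha.comp _ (Fin.castLE_injective hℓ)), Fintype.card_fin]
  have hW : W ≤ B.orthogonal W := span_le_orthogonal_span <|
    Set.forall_mem_range.mpr fun i => Set.forall_mem_range.mpr fun j => horth _ _
  have hmem (x : K) : x ∈ B.orthogonal W ↔
      ∀ i : Fin ((m - 1) / 2), (i : ℕ) < ℓ → Algebra.trace F K (x * a i) = 0 := by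
    simp only [W, mem_orthogonal_span_iff, Set.forall_mem_range, Function.comp_apply, B,
      Algebra.traceForm_apply]
    exact ⟨fun h i hi => mul_comm x (a i) ▸ h ⟨i, hi⟩, fun h j => mul_comm x _ ▸ h _ j.2⟩
  have hcount := card_isotropic_orthogonal hF2 (Algebra.traceForm_isSymm F)
    (traceForm_nondegenerate F K) (hm ▸ hmodd) hW
  rw [hF, hm, hWrank] at hcount
  rw [← hcount, ← Nat.card_subtype_ne_zero_and ⟨zero_mem _, LinearMap.map_zero₂ B 0⟩]
  exact Nat.card_congr <| Equiv.subtypeEquivRight fun x => by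
    rw [hmem, sq, and_comm (a := Algebra.trace F K _ = 0)]
    rfl

/-- Successive tangent-hyperplane sections of the parabolic quadric
`A = {x ∈ F_{q^m}* : Tr(x²) = 0}` (`q` odd, `m > 1` odd).  If `a_1, …` are linearly
independent over `F_q` with each `a_ℓ ∈ A ∩ H_1 ∩ ⋯ ∩ H_{ℓ−1}`, where
`H_ℓ = {x ∈ F_{q^m}* : Tr(x a_ℓ) = 0}`, then for `1 ≤ ℓ ≤ (m−1)/2`,
`|A ∩ H_1 ∩ ⋯ ∩ H_ℓ| = q^{m−ℓ−1} − 1`. -/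
theorem card_quadric_cone_section
    (q m : ℕ) (hq1 : 1 < q) (hqodd : Odd q) (hm1 : 1 < m) (hmodd : Odd m)
    (F : Type) [Field F] [Fintype F] (hF : Fintype.card F = q)
    (K : Type) [Field K] [Fintype K] [Algebra F K]
    (hK : Fintype.card K = q ^ m)
    (a : Fin ((m - 1) / 2) → K) (ha : LinearIndependent F a)
    (hamem : ∀ i : Fin ((m - 1) / 2),
      a i ≠ 0 ∧ Algebra.trace F K (a i ^ 2) = 0 ∧
        ∀ j : Fin ((m - 1) / 2), j < i → Algebra.trace F K (a i * a j) = 0) :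
    ∀ ℓ : ℕ, 1 ≤ ℓ → ℓ ≤ (m - 1) / 2 →
      Nat.card {x : K // x ≠ 0 ∧ Algebra.trace F K (x ^ 2) = 0 ∧
          ∀ i : Fin ((m - 1) / 2), (i : ℕ) < ℓ → Algebra.trace F K (x * a i) = 0} =
        q ^ (m - ℓ - 1) - 1 :=
  card_quadric_cone_section_general q m hqodd hmodd F hF K hK a ha hamem
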